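/- Let ℱ(t) = (1/√5)(α e^{(e^t−1)α} − β e^{(e^t−1)β}) with α = (1+√5)/2 and β = (1−√5)/2. Then for every integer r ≥ 1 and every real t, the r-th derivative of ℱ satisfies ℱ^{(r)}(t) = (1/√5) · Σ_{i=1}^{r} e^{i t} · S(r,i) · (α^{i+1} e^{α(e^t−1)} − β^{i+1} e^{β(e^t−1)}), where S(r,i) are the Stirling numbers of the second kind. -/

import Mathlib

/-- Stirling numbers of the second kind. -/
def stirling2 : ℕ → ℕ → ℕ
  | 0, 0 => 1
  | 0, _ + 1 => 0
  | _ + 1, 0 => 0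
  | n + 1, k + 1 => stirling2 n k + (k + 1) * stirling2 n (k + 1)

/-!
Write `E_a(t) = exp (a (eᵗ - 1))`, so that `ℱ = (α E_α - β E_β) / √5`. The functions
`w_i(t) = aⁱ e^{it} E_a(t)` satisfy `w_i' = i w_i + w_{i+1}`, and this is exactly the shape of the
recurrence `S(n+1, k) = S(n, k-1) + k S(n, k)`. Hence by induction
`E_a⁽ⁿ⁾ = ∑ₖ S(n, k) w_k` (the Touchard polynomial `Tₙ(a eᵗ)` times `E_a`), and the formula
follows by linearity; the term `k = 0` drops out since `S(n, 0) = 0` for `n ≥ 1`.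
-/

open Finset Real

theorem stirling2_eq_stirlingSecond : stirling2 = Nat.stirlingSecond := by
  funext n k
  induction n generalizing k with
  | zero => cases k <;> rfl
  | succ n ih =>
    cases k with
    | zero => rfl
    | succ k => rw [stirling2, Nat.stirlingSecond_succ_succ, ih, ih, add_comm]

theorem sum_stirlingSecond_succ_mul {R : Type*} [CommSemiring R] (n : ℕ) (w : ℕ → R) :
    ∑ i ∈ range (n + 2), (Nat.stirlingSecond (n + 1) i : R) * w i =
      ∑ i ∈ range (n + 1), (Nat.stirlingSecond n i : R) * (i * w i + w (i + 1)) := by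
  have hshift : ∑ i ∈ range (n + 1), ((i : R) + 1) * Nat.stirlingSecond n (i + 1) * w (i + 1) =
      ∑ i ∈ range (n + 1), (Nat.stirlingSecond n i : R) * (i * w i) := by
    rw [sum_range_succ, sum_range_succ' (fun i => (Nat.stirlingSecond n i : R) * (i * w i)),
      Nat.stirlingSecond_eq_zero_of_lt n.lt_succ_self]
    simp [mul_left_comm, mul_assoc]
  rw [sum_range_succ', Nat.stirlingSecond_succ_zero, Nat.cast_zero, zero_mul, add_zero]
  calc ∑ i ∈ range (n + 1), (Nat.stirlingSecond (n + 1) (i + 1) : R) * w (i + 1)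
      = ∑ i ∈ range (n + 1), ((Nat.stirlingSecond n i : R) * w (i + 1) +
          ((i : R) + 1) * Nat.stirlingSecond n (i + 1) * w (i + 1)) :=
        sum_congr rfl fun i _ => by rw [Nat.stirlingSecond_succ_succ]; push_cast; ring
    _ = ∑ i ∈ range (n + 1), ((Nat.stirlingSecond n i : R) * w (i + 1) +
          (Nat.stirlingSecond n i : R) * (i * w i)) := by
        rw [sum_add_distrib, hshift, sum_add_distrib]
    _ = _ := sum_congr rfl fun i _ => by ring

theorem hasDerivAt_pow_mul_exp_mul_exp_mul_exp_sub_one (a : ℝ) (i : ℕ) (t : ℝ) :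
    HasDerivAt (fun s => a ^ i * exp (i * s) * exp (a * (exp s - 1)))
      (i * (a ^ i * exp (i * t) * exp (a * (exp t - 1))) +
        a ^ (i + 1) * exp ((i + 1 : ℕ) * t) * exp (a * (exp t - 1))) t := by
  refine ((((hasDerivAt_id t).const_mul (i : ℝ)).exp.const_mul (a ^ i)).mul
    (((hasDerivAt_exp t).sub_const 1).const_mul a).exp).congr_deriv ?_
  rw [Nat.cast_succ, add_mul, one_mul, exp_add, pow_succ, id]
  ring

theorem iteratedDeriv_exp_mul_exp_sub_one (a : ℝ) (n : ℕ) :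
    iteratedDeriv n (fun t => exp (a * (exp t - 1))) = fun t =>
      ∑ i ∈ range (n + 1),
        (Nat.stirlingSecond n i : ℝ) * (a ^ i * exp (i * t) * exp (a * (exp t - 1))) := by
  induction n with
  | zero => simp
  | succ n ih =>
    ext t
    rw [iteratedDeriv_succ, ih, sum_stirlingSecond_succ_mul]
    exact (HasDerivAt.fun_sum fun i _ =>
      (hasDerivAt_pow_mul_exp_mul_exp_mul_exp_sub_one a i t).const_mul _).deriv

open Finset Real in
/-- Higher derivatives of the e.g.f. of the Fibonacci-Fubini numbers. -/
theorem fibonacciFubini_egf_iteratedDeriv (r : ℕ) (hr : 1 ≤ r) (t : ℝ) :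
    iteratedDeriv r
        (fun s : ℝ => (1 / Real.sqrt 5) *
          (((1 + Real.sqrt 5) / 2) * Real.exp ((Real.exp s - 1) * ((1 + Real.sqrt 5) / 2)) -
            ((1 - Real.sqrt 5) / 2) * Real.exp ((Real.exp s - 1) * ((1 - Real.sqrt 5) / 2)))) t =
      (1 / Real.sqrt 5) *
        ∑ i ∈ Finset.Icc 1 r, Real.exp (i * t) * (stirling2 r i : ℝ) *
          (((1 + Real.sqrt 5) / 2) ^ (i + 1) *
              Real.exp (((1 + Real.sqrt 5) / 2) * (Real.exp t - 1)) -
            ((1 - Real.sqrt 5) / 2) ^ (i + 1) *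
              Real.exp (((1 - Real.sqrt 5) / 2) * (Real.exp t - 1))) := by
  obtain ⟨m, rfl⟩ := Nat.exists_eq_add_of_le' hr
  have hE (a : ℝ) : iteratedDeriv (m + 1) (fun s => a * exp ((exp s - 1) * a)) t =
      ∑ i ∈ range (m + 1 + 1), a *
        ((Nat.stirlingSecond (m + 1) i : ℝ) * (a ^ i * exp (i * t) * exp (a * (exp t - 1)))) := by
    simp only [mul_comm (exp _ - 1), iteratedDeriv_const_mul_field,
      iteratedDeriv_exp_mul_exp_sub_one, mul_sum]
  rw [iteratedDeriv_const_mul_field, iteratedDeriv_fun_sub (by fun_prop) (by fun_prop), hE, hE,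
    ← sum_sub_distrib, sum_range_eq_add_Ico _ (by omega), Ico_add_one_right_eq_Icc,
    stirling2_eq_stirlingSecond]
  simp only [Nat.stirlingSecond_succ_zero, Nat.cast_zero, zero_mul, mul_zero, sub_zero, zero_add]
  exact congrArg _ (sum_congr rfl fun i _ => by ring)
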